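/- For a finite simple connected graph G, h(T(G)) > |E(G)| if and only if G has an internal vertex, i.e., a vertex of degree at least 2. -/

import Mathlib

/-- The primitive hole number of a simple graph: the number of triangles
(3-cliques) in the graph. -/
noncomputable def SimpleGraph.holeNumber {V : Type*} (G : SimpleGraph V) : ℕ :=
  {s : Finset V | G.IsNClique 3 s}.ncard

/-- The primitive degree of a vertex: the number of triangles (3-cliques)
of the graph containing that vertex. -/
noncomputable def SimpleGraph.primDegree {V : Type*} (G : SimpleGraph V) (v : V) : ℕ :=
  {s : Finset V | G.IsNClique 3 s ∧ v ∈ s}.ncard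

/-- The total graph of a simple graph `G`: vertices are the vertices and edges of `G`,
two of them adjacent iff the corresponding elements of `G` are adjacent or incident. -/
def SimpleGraph.totalGraph {V : Type*} (G : SimpleGraph V) :
    SimpleGraph (V ⊕ G.edgeSet) where
  Adj x y :=
    match x, y with
    | Sum.inl u, Sum.inl v => G.Adj u v
    | Sum.inl u, Sum.inr e => u ∈ (e : Sym2 V)
    | Sum.inr e, Sum.inl u => u ∈ (e : Sym2 V)
    | Sum.inr e, Sum.inr f => e ≠ f ∧ ∃ v, v ∈ (e : Sym2 V) ∧ v ∈ (f : Sym2 V)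
  symm := by
    constructor
    rintro (u | e) (v | f) h
    · exact G.adj_symm h
    · exact h
    · exact h
    · exact ⟨h.1.symm, h.2.imp fun v hv => ⟨hv.2, hv.1⟩⟩
  loopless := by
    constructor
    rintro (u | e) h
    · exact G.irrefl h
    · exact h.1 rfl

namespace SimpleGraph

variable {V : Type*} {G : SimpleGraph V}

lemma two_le_degree_iff_nontrivial_neighborSet [Fintype V] [DecidableRel G.Adj] {v : V} :
    2 ≤ G.degree v ↔ (G.neighborSet v).Nontrivial := by
  rw [← card_neighborFinset_eq_degree, Nat.succ_le_iff, Finset.one_lt_card_iff_nontrivial,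
    Finset.Nontrivial, coe_neighborFinset]

lemma adj_other_of_mem_edge {e : G.edgeSet} {v : V} (h : v ∈ (e : Sym2 V)) :
    G.Adj v (Sym2.Mem.other h) := by
  rw [← mem_edgeSet, Sym2.other_spec h]
  exact e.2

lemma edge_eq_of_mem_of_mem (hG : ∀ v, (G.neighborSet v).Subsingleton)
    {e f : G.edgeSet} {v : V} (he : v ∈ (e : Sym2 V)) (hf : v ∈ (f : Sym2 V)) : e = f := by
  apply Subtype.ext
  rw [← Sym2.other_spec he, ← Sym2.other_spec hf,
    hG v (adj_other_of_mem_edge he) (adj_other_of_mem_edge hf)]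

lemma not_totalGraph_adj_inr_inr (hG : ∀ v, (G.neighborSet v).Subsingleton) {e f : G.edgeSet} :
    ¬ G.totalGraph.Adj (.inr e) (.inr f) := by
  rintro ⟨hne, _, he, hf⟩
  exact hne (edge_eq_of_mem_of_mem hG he hf)

section edgeTriangle

variable [DecidableEq V]

def edgeTriangle (G : SimpleGraph V) (e : G.edgeSet) : Finset (V ⊕ G.edgeSet) :=
  insert (.inr e) ((e : Sym2 V).toFinset.map .inl)

lemma inr_mem_edgeTriangle {e f : G.edgeSet} : .inr f ∈ G.edgeTriangle e ↔ f = e := by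
  simp [edgeTriangle]

lemma edgeTriangle_injective : Function.Injective G.edgeTriangle := fun _ _ h =>
  inr_mem_edgeTriangle.mp (h ▸ inr_mem_edgeTriangle.mpr rfl)

lemma edgeTriangle_eq {e : G.edgeSet} {u v : V} (huv : u ≠ v) (hu : u ∈ (e : Sym2 V))
    (hv : v ∈ (e : Sym2 V)) : G.edgeTriangle e = {.inr e, .inl u, .inl v} := by
  rw [edgeTriangle, (Sym2.mem_and_mem_iff huv).mp ⟨hu, hv⟩, Sym2.toFinset_mk_eq]
  simp

lemma isNClique_edgeTriangle (e : G.edgeSet) : G.totalGraph.IsNClique 3 (G.edgeTriangle e) := by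
  have hu := (e : Sym2 V).out_fst_mem
  have huv := adj_other_of_mem_edge hu
  rw [edgeTriangle_eq huv.ne hu (Sym2.other_mem hu), is3Clique_triple_iff]
  exact ⟨hu, Sym2.other_mem hu, huv⟩

/-- Without vertices of degree at least two, the only triangles of the total graph are the edge
triangles: two edges in a triangle would share a vertex, and three vertices would give one
of them two neighbours. -/
lemma exists_eq_edgeTriangle_of_isNClique (hG : ∀ v, (G.neighborSet v).Subsingleton)
    {s : Finset (V ⊕ G.edgeSet)} (hs : G.totalGraph.IsNClique 3 s) :
    ∃ e, s = G.edgeTriangle e := by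
  obtain ⟨a, b, c, hab, hac, hbc, rfl⟩ := is3Clique_iff.mp hs
  rcases a with u | e
  · rcases b with v | f
    · rcases c with w | g
      · exact absurd (hG u hab hac) (G.ne_of_adj hbc)
      · refine ⟨g, ?_⟩
        rw [edgeTriangle_eq (e := g) (G.ne_of_adj hab) hac hbc]
        ext; simp only [Finset.mem_insert, Finset.mem_singleton]; tauto
    · rcases c with w | g
      · refine ⟨f, ?_⟩
        rw [edgeTriangle_eq (e := f) (G.ne_of_adj hac) hab hbc]
        ext; simp only [Finset.mem_insert, Finset.mem_singleton]; tauto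
      · exact absurd hbc (not_totalGraph_adj_inr_inr hG)
  · rcases b with v | f
    · rcases c with w | g
      · exact ⟨e, (edgeTriangle_eq (e := e) (G.ne_of_adj hbc) hab hac).symm⟩
      · exact absurd hac (not_totalGraph_adj_inr_inr hG)
    · exact absurd hab (not_totalGraph_adj_inr_inr hG)

end edgeTriangle

lemma range_edgeTriangle_subset [DecidableEq V] :
    Set.range G.edgeTriangle ⊆ {s | G.totalGraph.IsNClique 3 s} := by
  rintro _ ⟨e, rfl⟩
  exact isNClique_edgeTriangle e

lemma ncard_range_edgeTriangle [DecidableEq V] :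
    (Set.range G.edgeTriangle).ncard = G.edgeSet.ncard := by
  rw [Set.ncard_range_of_injective edgeTriangle_injective, Nat.card_coe_set_eq]

lemma holeNumber_totalGraph_eq (hG : ∀ v, (G.neighborSet v).Subsingleton) :
    G.totalGraph.holeNumber = G.edgeSet.ncard := by
  classical
  rw [holeNumber, ← ncard_range_edgeTriangle]
  congr 1
  refine Set.Subset.antisymm (fun s hs => ?_) range_edgeTriangle_subset
  obtain ⟨e, rfl⟩ := exists_eq_edgeTriangle_of_isNClique hG hs
  exact ⟨e, rfl⟩

/-- Two edges at a common vertex, together with that vertex, form a triangle of the total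
graph which is not an edge triangle. -/
lemma ncard_edgeSet_lt_holeNumber_totalGraph [Finite V] {v : V}
    (hv : (G.neighborSet v).Nontrivial) : G.edgeSet.ncard < G.totalGraph.holeNumber := by
  classical
  obtain ⟨a, ha, b, hb, hab⟩ := hv
  let e : G.edgeSet := ⟨s(v, a), ha⟩
  let f : G.edgeSet := ⟨s(v, b), hb⟩
  have hef : e ≠ f := fun h => hab (Sym2.congr_right.mp (congrArg Subtype.val h))
  have hclique : G.totalGraph.IsNClique 3 {.inl v, .inr e, .inr f} := by
    rw [is3Clique_triple_iff]
    exact ⟨Sym2.mem_mk_left v a, Sym2.mem_mk_left v b,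
      hef, v, Sym2.mem_mk_left v a, Sym2.mem_mk_left v b⟩
  have hnew : {.inl v, .inr e, .inr f} ∉ Set.range G.edgeTriangle := by
    rintro ⟨g, hg⟩
    have he : Sum.inr e ∈ G.edgeTriangle g := by simp [hg]
    have hf : Sum.inr f ∈ G.edgeTriangle g := by simp [hg]
    exact hef ((inr_mem_edgeTriangle.mp he).trans (inr_mem_edgeTriangle.mp hf).symm)
  calc G.edgeSet.ncard
      < (insert {.inl v, .inr e, .inr f} (Set.range G.edgeTriangle)).ncard := by
        rw [Set.ncard_insert_of_notMem hnew, ncard_range_edgeTriangle]; omega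
    _ ≤ G.totalGraph.holeNumber :=
        Set.ncard_le_ncard (Set.insert_subset hclique range_edgeTriangle_subset) (Set.toFinite _)

end SimpleGraph

theorem holeNumber_totalGraph_gt_iff_general {V : Type*} [Fintype V]
    (G : SimpleGraph V) [DecidableRel G.Adj] :
    G.edgeSet.ncard < G.totalGraph.holeNumber ↔ ∃ v : V, 2 ≤ G.degree v := by
  simp only [SimpleGraph.two_le_degree_iff_nontrivial_neighborSet]
  refine ⟨fun h => ?_, fun ⟨v, hv⟩ => SimpleGraph.ncard_edgeSet_lt_holeNumber_totalGraph hv⟩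
  by_contra! hG
  exact h.ne' (SimpleGraph.holeNumber_totalGraph_eq hG)

/-- For a finite simple connected graph `G`, `h(T(G)) > |E(G)|` iff `G` has an
internal vertex (a vertex of degree at least `2`). -/
theorem holeNumber_totalGraph_gt_iff {V : Type*} [Fintype V]
    (G : SimpleGraph V) [DecidableRel G.Adj] (hconn : G.Connected) :
    G.edgeSet.ncard < G.totalGraph.holeNumber ↔ ∃ v : V, 2 ≤ G.degree v :=
  holeNumber_totalGraph_gt_iff_general G
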